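/- Let ρ be the map of Theorem 1 applied to the 2-simplex [0,1,2]: ρ([0,1,2]) = ([2,0])[0,1,2] + ([1,0]|[0,1,2]|[2,0])[0,1] + ([2,0]|[0,1,2]|[2,1])[1,2] + ([1,0]|[0,1,2]|[2,0]|[0,1,2]|[2,1])[1], with the signs as indicated by ε(s). Then D(ρ([0,1,2])) = ρ(∂[0,1,2]) = ρ([1,2]) − ρ([0,2]) + ρ([0,1]) in 𝕃_•(X), where X is the full 2-simplex. -/
import Mathlib


noncomputable section

/-- A string of beads: each bead is a vertex list (a simplex of dimension ≥ 1,
or a formal inverse of a 1-simplex written as a decreasing 2-element list). -/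
abbrev Beads : Type := List (List ℕ)

/-- A necklace (σ_1|…|σ_p)σ_{p+1}: a string of beads together with a marked bead. -/
abbrev Necklace : Type := Beads × List ℕ

/-- The free abelian group on necklaces (the underlying module of 𝕃_•(X) before
imposing the edge-cancellation relations). -/
abbrev LMod : Type := Necklace →₀ ℤ

/-- Shifted degree of a bead: dimension minus one. -/
def degB (b : List ℕ) : ℕ := b.length - 2

/-- Shifted degree of a string of beads: Σ |σ_i| − p. -/
def degSeq (s : Beads) : ℕ := (s.map degB).sum

/-- The differential of a single bead: shifted reduced boundary
(−s ∂̃ s⁻¹, signs (−1)^{j+1}) plus shifted reduced coproduct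
((s⊗s) Δ̃ s⁻¹, signs (−1)^j), expressed as a linear combination of replacement
bead strings. -/
def dBead (l : List ℕ) : Beads →₀ ℤ :=
  (∑ j ∈ Finset.Ioo 0 (l.length - 1),
      ((-1 : ℤ) ^ (j + 1)) • Finsupp.single ([l.eraseIdx j] : Beads) 1) +
  (∑ j ∈ Finset.Ioo 0 (l.length - 1),
      ((-1 : ℤ) ^ j) • Finsupp.single ([l.take (j + 1), l.drop j] : Beads) 1)

/-- The differential extended to a string of beads as a derivation, with Koszul
signs given by the shifted degrees of the preceding beads. -/
def dSeq (s : Beads) : Beads →₀ ℤ :=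
  ∑ r ∈ Finset.range s.length, ((-1 : ℤ) ^ (degSeq (s.take r))) •
    ((dBead (s.getD r [])).sum fun rep c =>
      c • Finsupp.single (s.take r ++ rep ++ s.drop (r + 1)) 1)

/-- The necklace differential D on a basis necklace (s, m):
(1) the differential of the bead string;  (2) the reduced boundary of the marked
bead;  (3) δ_L: the left part of the Alexander–Whitney coproduct of the marked
bead appended as a new bead at the end of the string;  (4) δ_R: the right part
prepended at the front (cyclic rotation), with the corresponding Koszul signs. -/
def DNeckB (x : Necklace) : LMod :=
  ((dSeq x.1).sum fun s c => c • Finsupp.single ((s, x.2) : Necklace) 1) +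
  ((-1 : ℤ) ^ (degSeq x.1)) •
    (∑ j ∈ Finset.Ioo 0 (x.2.length - 1),
      ((-1 : ℤ) ^ j) • Finsupp.single ((x.1, x.2.eraseIdx j) : Necklace) 1) +
  ((-1 : ℤ) ^ (degSeq x.1)) •
    (∑ j ∈ Finset.Ico 1 x.2.length,
      Finsupp.single ((x.1 ++ [x.2.take (j + 1)], x.2.drop j) : Necklace) 1) +
  (∑ j ∈ Finset.range (x.2.length - 1),
    ((-1 : ℤ) ^ (j + 1 + degSeq x.1 + (x.2.length - j - 2) * (degSeq x.1 + j))) •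
      Finsupp.single (([x.2.drop j] ++ x.1, x.2.take (j + 1)) : Necklace) 1)

/-- The necklace differential, extended linearly. -/
def DNeck : LMod →ₗ[ℤ] LMod :=
  Finsupp.lsum ℤ fun x => LinearMap.toSpanSingleton ℤ LMod (DNeckB x)

/-- The submodule of edge-cancellation relations: a 1-simplex adjacent to its
formal inverse (in either order) may be deleted from the bead string. -/
def rel : Submodule ℤ LMod :=
  Submodule.span ℤ
    {x | ∃ (l1 l2 : Beads) (m : List ℕ) (a b : ℕ), a ≠ b ∧
      x = Finsupp.single ((l1 ++ [a, b] :: [b, a] :: l2, m) : Necklace) 1 -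
          Finsupp.single ((l1 ++ l2, m) : Necklace) 1}

/-- The necklace complex 𝕃_•(X) (for X large enough to contain the simplices in
question): the quotient by the edge-cancellation relations. -/
abbrev LQ : Type := LMod ⧸ rel

/-- The quotient map. -/
def mkL : LMod →ₗ[ℤ] LQ := rel.mkQ

/-- ρ on a vertex: the constant necklace (id_[a])[a]. -/
def rhoV (a : ℕ) : LMod := Finsupp.single ((([] : Beads), [a]) : Necklace) 1

/-- ρ on a 1-simplex [a,b]: the necklace ([b,a])[a,b]. -/
def rhoE (a b : ℕ) : LMod := Finsupp.single (([[b, a]], [a, b]) : Necklace) 1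

/-- ρ on the 2-simplex [0,1,2], with the four summands and signs (all +1, as
computed from ε(s)):
([2,0])[0,1,2] + ([1,0]|[0,1,2]|[2,0])[0,1] + ([2,0]|[0,1,2]|[2,1])[1,2]
+ ([1,0]|[0,1,2]|[2,0]|[0,1,2]|[2,1])[1]. -/
def rhoTwo : LMod :=
  Finsupp.single (([[2, 0]], [0, 1, 2]) : Necklace) 1 +
  Finsupp.single (([[1, 0], [0, 1, 2], [2, 0]], [0, 1]) : Necklace) 1 +
  Finsupp.single (([[2, 0], [0, 1, 2], [2, 1]], [1, 2]) : Necklace) 1 +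
  Finsupp.single (([[1, 0], [0, 1, 2], [2, 0], [0, 1, 2], [2, 1]], [1]) : Necklace) 1

lemma keyDNeck : DNeck rhoTwo =
    (-Finsupp.single (([[2, 0]], [0, 2]) : Necklace) 1) +
      ((Finsupp.single (([[2, 0], [0, 1]], [1, 2]) : Necklace) 1) +
        Finsupp.single (([[2, 0], [0, 1, 2]], [2]) : Necklace) 1) +
      ((-Finsupp.single (([[0, 1, 2], [2, 0]], [0]) : Necklace) 1) +
        Finsupp.single (([[1, 2], [2, 0]], [0, 1]) : Necklace) 1) +
      ((((Finsupp.single (([[1, 0], [0, 2], [2, 0]], [0, 1]) : Necklace) 1) +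
            -Finsupp.single (([[1, 0], [0, 1], [1, 2], [2, 0]], [0, 1]) : Necklace) 1) +
          -Finsupp.single (([[1, 0], [0, 1, 2], [2, 0], [0, 1]], [1]) : Necklace) 1) +
        Finsupp.single (([[0, 1], [1, 0], [0, 1, 2], [2, 0]], [0]) : Necklace) 1) +
      ((((Finsupp.single (([[2, 0], [0, 2], [2, 1]], [1, 2]) : Necklace) 1) +
            -Finsupp.single (([[2, 0], [0, 1], [1, 2], [2, 1]], [1, 2]) : Necklace) 1) +
          -Finsupp.single (([[2, 0], [0, 1, 2], [2, 1], [1, 2]], [2]) : Necklace) 1) +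
        Finsupp.single (([[1, 2], [2, 0], [0, 1, 2], [2, 1]], [1]) : Necklace) 1) +
      (((Finsupp.single (([[1, 0], [0, 2], [2, 0], [0, 1, 2], [2, 1]], [1]) : Necklace) 1) +
          -Finsupp.single (([[1, 0], [0, 1], [1, 2], [2, 0], [0, 1, 2], [2, 1]], [1]) : Necklace) 1) +
        ((-Finsupp.single (([[1, 0], [0, 1, 2], [2, 0], [0, 2], [2, 1]], [1]) : Necklace) 1) +
          Finsupp.single (([[1, 0], [0, 1, 2], [2, 0], [0, 1], [1, 2], [2, 1]], [1]) : Necklace) 1)) := by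
  simp only [DNeck, rhoTwo, map_add, Finsupp.lsum_single, LinearMap.toSpanSingleton_apply,
    one_smul, DNeckB, dSeq, dBead, degSeq, degB]
  norm_num [Finset.sum_range_succ, show Finset.Ioo 0 2 = {1} from rfl,
    show Finset.Ioo 0 1 = (∅ : Finset ℕ) from rfl, show Finset.Ico 1 3 = {1,2} from rfl,
    show Finset.Ico 1 2 = {1} from rfl, show Finset.Ico 1 1 = (∅ : Finset ℕ) from rfl,
    Finset.sum_insert, Finsupp.sum_add, Finsupp.sum_single_index, degB,
    Finsupp.sum_add_index', Finsupp.sum_neg_index, Finsupp.single_neg]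

lemma cancel (l1 l2 : Beads) (m : List ℕ) (a b : ℕ) (h : a ≠ b) :
    mkL (Finsupp.single ((l1 ++ [a, b] :: [b, a] :: l2, m) : Necklace) 1) =
    mkL (Finsupp.single ((l1 ++ l2, m) : Necklace) 1) := by
  rw [mkL, ← sub_eq_zero, ← map_sub, Submodule.mkQ_apply, Submodule.Quotient.mk_eq_zero]
  exact Submodule.subset_span ⟨l1, l2, m, a, b, h, rfl⟩

/-- for X = Δ², D(ρ([0,1,2])) = ρ(∂[0,1,2]) = ρ([1,2]) − ρ([0,2]) + ρ([0,1])
in the necklace complex 𝕃_•(X). -/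
theorem stmt15 : mkL (DNeck rhoTwo) = mkL (rhoE 1 2 - rhoE 0 2 + rhoE 0 1) := by
  rw [keyDNeck]
  simp only [map_add, map_neg, map_sub, rhoE]
  have c0 : mkL (Finsupp.single (([[0,1],[1,0],[0,1,2],[2,0]], [0]) : Necklace) 1) = mkL (Finsupp.single (([[0,1,2],[2,0]], [0]) : Necklace) 1) := cancel [] [[0,1,2],[2,0]] [0] 0 1 (by norm_num)
  have c1 : mkL (Finsupp.single (([[1,0],[0,1],[1,2],[2,0]], [0,1]) : Necklace) 1) = mkL (Finsupp.single (([[1,2],[2,0]], [0,1]) : Necklace) 1) := cancel [] [[1,2],[2,0]] [0,1] 1 0 (by norm_num)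
  have c2 : mkL (Finsupp.single (([[1,0],[0,1],[1,2],[2,0],[0,1,2],[2,1]], [1]) : Necklace) 1) = mkL (Finsupp.single (([[1,2],[2,0],[0,1,2],[2,1]], [1]) : Necklace) 1) := cancel [] [[1,2],[2,0],[0,1,2],[2,1]] [1] 1 0 (by norm_num)
  have c3 : mkL (Finsupp.single (([[1,0],[0,1,2],[2,0],[0,1],[1,2],[2,1]], [1]) : Necklace) 1) = mkL (Finsupp.single (([[1,0],[0,1,2],[2,0],[0,1]], [1]) : Necklace) 1) := cancel [[1,0],[0,1,2],[2,0],[0,1]] [] [1] 1 2 (by norm_num)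
  have c4 : mkL (Finsupp.single (([[1,0],[0,1,2],[2,0],[0,2],[2,1]], [1]) : Necklace) 1) = mkL (Finsupp.single (([[1,0],[0,1,2],[2,1]], [1]) : Necklace) 1) := cancel [[1,0],[0,1,2]] [[2,1]] [1] 2 0 (by norm_num)
  have c5 : mkL (Finsupp.single (([[1,0],[0,2],[2,0],[0,1,2],[2,1]], [1]) : Necklace) 1) = mkL (Finsupp.single (([[1,0],[0,1,2],[2,1]], [1]) : Necklace) 1) := cancel [[1,0]] [[0,1,2],[2,1]] [1] 0 2 (by norm_num)
  have c6 : mkL (Finsupp.single (([[1,0],[0,2],[2,0]], [0,1]) : Necklace) 1) = mkL (Finsupp.single (([[1,0]], [0,1]) : Necklace) 1) := cancel [[1,0]] [] [0,1] 0 2 (by norm_num)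
  have c7 : mkL (Finsupp.single (([[2,0],[0,1],[1,2],[2,1]], [1,2]) : Necklace) 1) = mkL (Finsupp.single (([[2,0],[0,1]], [1,2]) : Necklace) 1) := cancel [[2,0],[0,1]] [] [1,2] 1 2 (by norm_num)
  have c8 : mkL (Finsupp.single (([[2,0],[0,2],[2,1]], [1,2]) : Necklace) 1) = mkL (Finsupp.single (([[2,1]], [1,2]) : Necklace) 1) := cancel [] [[2,1]] [1,2] 2 0 (by norm_num)
  have c9 : mkL (Finsupp.single (([[2,0],[0,1,2],[2,1],[1,2]], [2]) : Necklace) 1) = mkL (Finsupp.single (([[2,0],[0,1,2]], [2]) : Necklace) 1) := cancel [[2,0],[0,1,2]] [] [2] 2 1 (by norm_num)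
  rw [c0, c1, c2, c3, c4, c5, c6, c7, c8, c9]
  abel

end
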